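/- A sequence (X_n) of L²_loc-valued stochastic processes is tight with respect to the L²_w-topology if and only if, for each T > 0, the sequence of real random variables (|X_n|_T)_{n≥1} is tight. -/

import Mathlib

open MeasureTheory Set Filter Topology ProbabilityTheory
open scoped ENNReal NNReal

noncomputable section

namespace RV

/-! ### The space `L²_loc` and the weak dual (`L²_w`) topology -/

/-- Membership in `L²_loc`: measurable, locally square integrable on `(0,T]` for all `T > 0`. -/
def LlocMem (f : ℝ → ℝ) : Prop :=
  Measurable f ∧ ∀ T : ℝ, 0 < T → IntegrableOn (fun t => (f t) ^ 2) (Ioc 0 T) volume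

/-- The space `L²_loc`. -/
def Lloc : Type := {f : ℝ → ℝ // LlocMem f}

lemma zero_mem_Lloc : LlocMem (fun _ => (0 : ℝ)) := by
  refine ⟨measurable_const, fun T hT => ?_⟩
  have h : (fun t : ℝ => ((fun _ : ℝ => (0 : ℝ)) t) ^ 2) = fun _ : ℝ => (0 : ℝ) := by
    funext t; norm_num
  rw [h]
  exact (integrableOn_const_iff).mpr (Or.inr measure_Ioc_lt_top)

open Classical in
/-- Interpret a raw function as an element of `L²_loc` (junk value if not a member). -/
def mkLloc (f : ℝ → ℝ) : Lloc := if h : LlocMem f then ⟨f, h⟩ else ⟨fun _ => 0, zero_mem_Lloc⟩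

/-- The norm `|x|_T = (∫_0^T x(t)² dt)^{1/2}`. -/
def locNorm (T : ℝ) (f : ℝ → ℝ) : ℝ := Real.sqrt (∫ t in Ioc (0 : ℝ) T, (f t) ^ 2)

/-- Test pairs `(T, f)` with `T > 0` and `f ∈ L²[0,T]`. -/
def TestIdx : Type :=
  {p : ℝ × (ℝ → ℝ) // 0 < p.1 ∧ Measurable p.2 ∧
    IntegrableOn (fun t => (p.2 t) ^ 2) (Ioc 0 p.1) volume}

/-- The pairing `x ↦ ∫_0^T x(t) f(t) dt`. -/
def pairing (p : TestIdx) (x : Lloc) : ℝ := ∫ t in Ioc (0 : ℝ) p.1.1, x.1 t * p.1.2 t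

/-- The `L²_w`-topology on `L²_loc`: the initial topology for all the pairings. -/
instance : TopologicalSpace Lloc :=
  ⨅ p : TestIdx, TopologicalSpace.induced (pairing p) inferInstance

instance : MeasurableSpace Lloc := borel Lloc

/-! ### Tightness and convergence in distribution -/

/-- Tightness of the laws of a sequence of random elements of a topological space. -/
def TightLaws {Ω : Type*} [MeasurableSpace Ω] {α : Type*} [TopologicalSpace α]
    (P : Measure Ω) (X : ℕ → Ω → α) : Prop :=
  ∀ ε : ℝ≥0∞, 0 < ε → ∃ K : Set α, IsCompact K ∧ ∀ n, P ((X n) ⁻¹' Kᶜ) ≤ ε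

/-- Tightness of a sequence of real random variables. -/
def TightReal {Ω : Type*} [MeasurableSpace Ω] (P : Measure Ω) (g : ℕ → Ω → ℝ) : Prop :=
  ∀ ε : ℝ≥0∞, 0 < ε → ∃ M : ℝ, ∀ n, P {ω | M < |g n ω|} ≤ ε

/-- Convergence in distribution (weak convergence of laws) of random elements of a
topological space, the limit being allowed to live on a different probability space. -/
def ConvInDist {Ω Ω' α : Type*} [MeasurableSpace Ω] [MeasurableSpace Ω'] [TopologicalSpace α]
    (P : Measure Ω) (P' : Measure Ω') (X : ℕ → Ω → α) (Y : Ω' → α) : Prop :=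
  ∀ F : BoundedContinuousFunction α ℝ,
    Tendsto (fun n => ∫ ω, F (X n ω) ∂P) atTop (𝓝 (∫ ω, F (Y ω) ∂P'))

/-- Convergence of finite dimensional distributions, for times in `S`. -/
def FddConvOn {Ω Ω' β : Type*} [MeasurableSpace Ω] [MeasurableSpace Ω'] [TopologicalSpace β]
    (S : Set ℝ) (P : Measure Ω) (P' : Measure Ω')
    (X : ℕ → Ω → ℝ → β) (Y : Ω' → ℝ → β) : Prop :=
  ∀ (m : ℕ) (ts : Fin m → ℝ), (∀ i, ts i ∈ S) →
    ConvInDist P P' (fun n ω => fun i => X n ω (ts i)) (fun ω => fun i => Y ω (ts i))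

/-- Equality of all finite dimensional distributions (over nonnegative times). -/
def FddEq {Ω Ω' β : Type*} [MeasurableSpace Ω] [MeasurableSpace Ω'] [MeasurableSpace β]
    (P : Measure Ω) (P' : Measure Ω') (X : Ω → ℝ → β) (Y : Ω' → ℝ → β) : Prop :=
  ∀ (m : ℕ) (ts : Fin m → ℝ), (∀ i, 0 ≤ ts i) →
    Measure.map (fun ω => fun i => X ω (ts i)) P
      = Measure.map (fun ω => fun i => Y ω (ts i)) P'

/-- The integral operator `I(x)(t) = ∫_0^t x(s) ds`. -/
def Itg (x : ℝ → ℝ) (t : ℝ) : ℝ := ∫ s in Ioc (0 : ℝ) t, x s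

/-! ### Càdlàg paths, monotone paths and inverses -/

/-- `f` is càdlàg on `[0,∞)`: right-continuous everywhere on `[0,∞)`,
with left limits at every `t > 0`. -/
def IsCadlag {E : Type*} [TopologicalSpace E] (f : ℝ → E) : Prop :=
  (∀ t : ℝ, 0 ≤ t → ContinuousWithinAt f (Ici t) t) ∧
  (∀ t : ℝ, 0 < t → ∃ L : E, Tendsto f (𝓝[<] t) (𝓝 L))

/-- The right-continuous generalized inverse `τ(s) = inf{t ≥ 0 : y(t) > s}`. -/
def rinv (y : ℝ → ℝ) (s : ℝ) : ℝ := sInf {t : ℝ | 0 ≤ t ∧ s < y t}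

/-- The set `D_↑`: càdlàg, non-negative, non-decreasing, tending to infinity. -/
def DUp (y : ℝ → ℝ) : Prop :=
  IsCadlag y ∧ (∀ t : ℝ, 0 ≤ t → 0 ≤ y t) ∧ MonotoneOn y (Ici 0) ∧ Tendsto y atTop atTop

/-! ### The moduli `𝕄`, `𝕁`, `ℂ` and the associated tightness/weak convergence notions -/

/-- `𝕄(a,b,c)`: distance from `b` to the segment `[a,c]`. -/
def MM {E : Type*} [SeminormedAddCommGroup E] [NormedSpace ℝ E] (a b c : E) : ℝ :=
  Metric.infDist b (segment ℝ a c)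

/-- `𝕁(a,b,c) = min(‖b-a‖, ‖b-c‖)`. -/
def JJ {E : Type*} [SeminormedAddCommGroup E] (a b c : E) : ℝ := min ‖b - a‖ ‖b - c‖

/-- `ℂ(a,b,c) = ‖c-a‖`. -/
def CC {E : Type*} [SeminormedAddCommGroup E] (a b c : E) : ℝ := ‖c - a‖

/-- The oscillation modulus `ω_H(x, δ, T)` built from a functional `H` on triples. -/
def osc {E : Type*} (H : E → E → E → ℝ) (x : ℝ → E) (δ T : ℝ) : ℝ :=
  sSup {r : ℝ | ∃ t1 t2 t3 : ℝ, 0 ≤ t1 ∧ t1 < t2 ∧ t2 < t3 ∧ t3 ≤ T ∧ t3 - t1 < δ ∧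
    r = H (x t1) (x t2) (x t3)}

/-- The modulus condition in `H₁`-tightness:
`lim_{δ→0⁺} limsup_n P(ω_H(X_n,δ,T) > ε) = 0` for all `ε, T > 0`. -/
def TightMod {Ω E : Type*} [MeasurableSpace Ω] (H : E → E → E → ℝ)
    (P : Measure Ω) (X : ℕ → Ω → ℝ → E) : Prop :=
  ∀ ε T : ℝ, 0 < ε → 0 < T →
    Tendsto (fun δ : ℝ => limsup (fun n => P {ω | ε < osc H (X n ω) δ T}) atTop)
      (𝓝[>] (0 : ℝ)) (𝓝 (0 : ℝ≥0∞))

/-- Tightness of the marginals over a dense set of times containing `0`. -/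
def TightMarginals {Ω E : Type*} [MeasurableSpace Ω] [TopologicalSpace E]
    (P : Measure Ω) (X : ℕ → Ω → ℝ → E) : Prop :=
  ∃ S : Set ℝ, S ⊆ Ici 0 ∧ (0 : ℝ) ∈ S ∧ Ici (0 : ℝ) ⊆ closure S ∧
    ∀ t ∈ S, ∀ ε : ℝ≥0∞, 0 < ε → ∃ K : Set E, IsCompact K ∧ ∀ n, P {ω | X n ω t ∉ K} ≤ ε

/-- `H₁`-tightness of a sequence of `D`-valued processes. -/
def TightH {Ω E : Type*} [MeasurableSpace Ω] [TopologicalSpace E] (H : E → E → E → ℝ)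
    (P : Measure Ω) (X : ℕ → Ω → ℝ → E) : Prop :=
  TightMarginals P X ∧ TightMod H P X

/-- Weak convergence in the `H₁`-topology: `H₁`-tightness plus convergence of the
finite dimensional distributions over a dense set of times containing `0`. -/
def WeakH {Ω Ω' E : Type*} [MeasurableSpace Ω] [MeasurableSpace Ω'] [TopologicalSpace E]
    (H : E → E → E → ℝ) (P : Measure Ω) (P' : Measure Ω')
    (X : ℕ → Ω → ℝ → E) (Y : Ω' → ℝ → E) : Prop :=
  TightH H P X ∧ ∃ S : Set ℝ, S ⊆ Ici 0 ∧ (0 : ℝ) ∈ S ∧ Ici (0 : ℝ) ⊆ closure S ∧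
    FddConvOn S P P' X Y

/-- `M₁`-convergence of deterministic càdlàg functions: pointwise convergence on a dense
set of times containing `0`, plus the vanishing `𝕄`-modulus condition. -/
def M1ConvDet {E : Type*} [SeminormedAddCommGroup E] [NormedSpace ℝ E]
    (x : ℕ → ℝ → E) (y : ℝ → E) : Prop :=
  (∃ S : Set ℝ, S ⊆ Ici 0 ∧ (0 : ℝ) ∈ S ∧ Ici (0 : ℝ) ⊆ closure S ∧
      ∀ t ∈ S, Tendsto (fun n => x n t) atTop (𝓝 (y t))) ∧
  ∀ T : ℝ, 0 < T →
    Tendsto (fun δ : ℝ => limsup (fun n => osc MM (x n) δ T) atTop) (𝓝[>] (0 : ℝ)) (𝓝 (0 : ℝ))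

/-! ### Martingales, compensators, Brownian motion, Lévy processes -/

/-- A martingale on the nonnegative time axis. -/
def MartingaleNN {Ω : Type*} {m0 : MeasurableSpace Ω} (ℱ : Filtration ℝ m0)
    (P : Measure Ω) (M : ℝ → Ω → ℝ) : Prop :=
  (∀ t : ℝ, 0 ≤ t → Measurable[ℱ t] (M t)) ∧
  (∀ t : ℝ, 0 ≤ t → Integrable (M t) P) ∧
  (∀ s t : ℝ, 0 ≤ s → s ≤ t → P[M t|ℱ s] =ᵐ[P] M s)

/-- The predictable σ-algebra on `ℝ × Ω` associated with a filtration. -/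
def predictableSigma {Ω : Type*} (m0 : MeasurableSpace Ω) (ℱ : Filtration ℝ m0) :
    MeasurableSpace (ℝ × Ω) :=
  MeasurableSpace.generateFrom
    ({S | ∃ s t : ℝ, ∃ A : Set Ω, 0 ≤ s ∧ s < t ∧ MeasurableSet[ℱ s] A ∧ S = Ioc s t ×ˢ A} ∪
     {S | ∃ A : Set Ω, MeasurableSet[ℱ 0] A ∧ S = ({0} : Set ℝ) ×ˢ A})

/-- `A = ⟨M⟩` is the predictable compensator (predictable quadratic variation) of the
square integrable martingale `M`: a predictable, non-decreasing càdlàg process vanishing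
at `0` such that `M² - A` is a martingale. -/
def IsCompensator {Ω : Type*} {m0 : MeasurableSpace Ω} (ℱ : Filtration ℝ m0)
    (P : Measure Ω) (M A : ℝ → Ω → ℝ) : Prop :=
  (∀ ω, A 0 ω = 0) ∧
  (∀ ω, MonotoneOn (fun t => A t ω) (Ici 0)) ∧
  (∀ ω, IsCadlag (fun t => A t ω)) ∧
  (@Measurable (ℝ × Ω) ℝ (predictableSigma m0 ℱ) _ (fun p => A p.1 p.2)) ∧
  MartingaleNN ℱ P (fun t ω => (M t ω) ^ 2 - A t ω)

/-- `Q = [M]` is the quadratic variation of the square integrable martingale `M`: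
an adapted non-decreasing càdlàg process vanishing at `0` such that `M² - Q` is a
martingale and whose jumps are the squared jumps of `M`. -/
def IsQuadVar {Ω : Type*} {m0 : MeasurableSpace Ω} (ℱ : Filtration ℝ m0)
    (P : Measure Ω) (M Q : ℝ → Ω → ℝ) : Prop :=
  (∀ ω, Q 0 ω = 0) ∧
  (∀ ω, MonotoneOn (fun t => Q t ω) (Ici 0)) ∧
  (∀ ω, IsCadlag (fun t => Q t ω)) ∧
  (∀ t : ℝ, 0 ≤ t → Measurable[ℱ t] (Q t)) ∧
  MartingaleNN ℱ P (fun t ω => (M t ω) ^ 2 - Q t ω) ∧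
  (∀ ω, ∀ t : ℝ, 0 < t →
    Q t ω - Function.leftLim (fun s => Q s ω) t
      = (M t ω - Function.leftLim (fun s => M s ω) t) ^ 2)

/-- A standard Brownian motion (on `[0,∞)`). -/
structure IsBrownian {Ω : Type*} [MeasurableSpace Ω] (P : Measure Ω) (W : Ω → ℝ → ℝ) :
    Prop where
  init : ∀ ω, W ω 0 = 0
  cont : ∀ ω, ContinuousOn (W ω) (Ici 0)
  meas : ∀ t : ℝ, Measurable (fun ω => W ω t)
  incr_law : ∀ s t : ℝ, 0 ≤ s → s ≤ t →
    Measure.map (fun ω => W ω t - W ω s) P = gaussianReal 0 (Real.toNNReal (t - s))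
  indep_incr : ∀ (m : ℕ) (ts : Fin (m + 1) → ℝ), (∀ i, 0 ≤ ts i) → Monotone ts →
    iIndepFun
      (fun i : Fin m => fun ω => W ω (ts i.succ) - W ω (ts i.castSucc)) P

/-- A Brownian motion with respect to a filtration `𝔽`. -/
structure IsFBrownian {Ω : Type*} [mΩ : MeasurableSpace Ω] (P : Measure Ω)
    (ℱ : Filtration ℝ mΩ) (W : Ω → ℝ → ℝ) : Prop extends IsBrownian P W where
  adapted : ∀ t : ℝ, 0 ≤ t → Measurable[ℱ t] (fun ω => W ω t)
  indep_past : ∀ s t : ℝ, 0 ≤ s → s ≤ t →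
    Indep (MeasurableSpace.comap (fun ω => W ω t - W ω s) (borel ℝ)) (ℱ s) P

/-- An inhomogeneous Lévy process: càdlàg, adapted, starting at `0`, with increments
independent of the past (hence with deterministic characteristics) and without fixed
times of discontinuity. -/
structure IsInhomLevy {Ω : Type*} [mΩ : MeasurableSpace Ω] (P : Measure Ω)
    (ℱ : Filtration ℝ mΩ) (A : Ω → ℝ → ℝ) : Prop where
  init : ∀ ω, A ω 0 = 0
  cadlag : ∀ ω, IsCadlag (A ω)
  adapted : ∀ t : ℝ, 0 ≤ t → Measurable[ℱ t] (fun ω => A ω t)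
  indep_incr : ∀ s t : ℝ, 0 ≤ s → s ≤ t →
    Indep (MeasurableSpace.comap (fun ω => A ω t - A ω s) (borel ℝ)) (ℱ s) P
  no_fixed_disc : ∀ t : ℝ, 0 < t → ∀ᵐ ω ∂P, Tendsto (A ω) (𝓝[<] t) (𝓝 (A ω t))


/-- A packaged probability space, used to state existential conclusions
("there exists a probability space carrying ..."). -/
structure ProbPack where
  carrier : Type
  inst : MeasurableSpace carrier
  P : @Measure carrier inst
  isProb : @IsProbabilityMeasure carrier inst P

attribute [instance] ProbPack.inst ProbPack.isProb

end RV

/-!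
The pairings `x ↦ ∫₀ᵀ x f` embed `L²_loc`, with the `L²_w`-topology, into `ℝ^TestIdx`.

On a compact set every pairing is bounded, so by the uniform boundedness principle in
`L²(0,T]` the norms `|x|_T` are bounded there; tightness of the laws thus gives tightness of
each `|X_n|_T`.

Conversely, choose radii `M_k` with `P(|X_n|_{k+1} > M_k) ≤ δ_k` and `∑ δ_k < ε`. The ball
`{x | ∀ k, |x|_{k+1} ≤ M_k}` is compact by the Banach–Alaoglu argument: its image in
`ℝ^TestIdx` consists of the families obeying every linear relation among the pairings together
with the Cauchy–Schwarz bounds, a closed subset of a product of compact intervals; and each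
such family is represented, by the Riesz theorem on every `L²(0,k+1]`, by functions that agree
on overlaps and glue to an element of the ball.
-/

open scoped RealInnerProductSpace

section InnerProductSpace

variable {E : Type*} [NormedAddCommGroup E] [InnerProductSpace ℝ E] [CompleteSpace E]

lemma exists_norm_le_forall_inner_eq (φ : E → ℝ) (hadd : ∀ f g, φ (f + g) = φ f + φ g)
    (hsmul : ∀ (c : ℝ) f, φ (c • f) = c * φ f) {C : ℝ} (hC : 0 ≤ C)
    (hbound : ∀ f, |φ f| ≤ C * ‖f‖) :
    ∃ g : E, ‖g‖ ≤ C ∧ ∀ f, ⟪g, f⟫ = φ f := by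
  let L : E →ₗ[ℝ] ℝ := { toFun := φ, map_add' := hadd, map_smul' := hsmul }
  let Λ : StrongDual ℝ E := L.mkContinuous C hbound
  refine ⟨(InnerProductSpace.toDual ℝ E).symm Λ, ?_, fun f => InnerProductSpace.toDual_symm_apply⟩
  rw [LinearIsometryEquiv.norm_map]
  exact L.mkContinuous_norm_le hC hbound

lemma exists_norm_le_of_forall_abs_inner_le {s : Set E}
    (h : ∀ f : E, ∃ C, ∀ x ∈ s, |⟪x, f⟫| ≤ C) : ∃ C, ∀ x ∈ s, ‖x‖ ≤ C := by
  obtain ⟨C, hC⟩ := banach_steinhaus (g := fun x : s => innerSL ℝ (x : E)) fun f => by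
    obtain ⟨C, hC⟩ := h f
    exact ⟨C, fun x => by simpa using hC x x.2⟩
  exact ⟨C, fun x hx => by simpa using hC ⟨x, hx⟩⟩

end InnerProductSpace

namespace MeasureTheory

variable {α : Type*} [MeasurableSpace α] {μ : Measure α}

lemma L2.inner_eq_integral_mul (f g : Lp ℝ 2 μ) : ⟪f, g⟫ = ∫ a, f a * g a ∂μ := by
  simp [L2.inner_def, mul_comm]

lemma MemLp.inner_toLp_eq_integral_mul {u v : α → ℝ} (hu : MemLp u 2 μ) (hv : MemLp v 2 μ) :
    ⟪hu.toLp u, hv.toLp v⟫ = ∫ a, u a * v a ∂μ := by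
  rw [L2.inner_eq_integral_mul]
  refine integral_congr_ae ?_
  filter_upwards [hu.coeFn_toLp, hv.coeFn_toLp] with a hua hva
  rw [hua, hva]

lemma Lp.ae_eq_of_forall_integral_mul_eq (g : Lp ℝ 2 μ) {v : α → ℝ} (hv : MemLp v 2 μ)
    (h : ∀ f : Lp ℝ 2 μ, ∫ a, g a * f a ∂μ = ∫ a, v a * f a ∂μ) : g =ᵐ[μ] v := by
  have hg : g = hv.toLp v := ext_inner_right ℝ fun f => by
    rw [L2.inner_eq_integral_mul, h f, ← MemLp.inner_toLp_eq_integral_mul hv (Lp.memLp f),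
      Lp.toLp_coeFn]
  rw [hg]
  exact hv.coeFn_toLp

end MeasureTheory

lemma exists_measurable_ae_eq_of_consistent {μ : Measure ℝ} {g : ℕ → ℝ → ℝ}
    (hg : ∀ k, Measurable (g k))
    (hcons : ∀ j k : ℕ, j ≤ k → g j =ᵐ[μ.restrict (Ioc 0 (j + 1))] g k) :
    ∃ z : ℝ → ℝ, Measurable z ∧ ∀ k : ℕ, z =ᵐ[μ.restrict (Ioc 0 (k + 1))] g k := by
  have hpiece : ∀ (j : ℕ) (t : ℝ), t ∈ Ioc (j : ℝ) (j + 1) → ⌈t⌉₊ - 1 = j := fun j t ht => by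
    rw [(Nat.ceil_eq_iff j.succ_ne_zero).2 (by push_cast; simpa using ht)]
    rfl
  refine ⟨fun t => g (⌈t⌉₊ - 1) t, ?_, fun k => ?_⟩
  · exact (measurable_from_prod_countable_left (f := fun q : ℝ × ℕ => g q.2 q.1) hg).comp
      (measurable_id.prodMk ((measurable_of_countable (· - 1)).comp Nat.measurable_ceil))
  have hcover : Ioc (0 : ℝ) (k + 1) ⊆ ⋃ j ∈ Iic k, Ioc (j : ℝ) (j + 1) := by
    intro t ht
    have hceil : ⌈t⌉₊ ≠ 0 := (Nat.ceil_pos.2 ht.1).ne'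
    obtain ⟨hlt, hle⟩ := (Nat.ceil_eq_iff hceil).1 rfl
    refine mem_biUnion (x := ⌈t⌉₊ - 1) ?_ ⟨hlt, ?_⟩
    · have : ⌈t⌉₊ ≤ k + 1 := Nat.ceil_le.2 (by exact_mod_cast ht.2)
      exact Nat.sub_le_of_le_add this
    · rwa [Nat.cast_sub (Nat.one_le_iff_ne_zero.2 hceil), Nat.cast_one, sub_add_cancel]
  refine ae_restrict_of_ae_restrict_of_subset hcover
    ((ae_restrict_biUnion_iff _ (to_countable _) _).2 fun j hj => ?_)
  filter_upwards [ae_restrict_mem measurableSet_Ioc, ae_restrict_of_ae_restrict_of_subset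
    (Ioc_subset_Ioc_left j.cast_nonneg) (hcons j k hj)] with t ht hjk
  simp only [hpiece j t ht, hjk]

namespace RV

lemma locNorm_nonneg (T : ℝ) (u : ℝ → ℝ) : 0 ≤ locNorm T u := Real.sqrt_nonneg _

lemma locNorm_congr_ae {T : ℝ} {u v : ℝ → ℝ} (h : u =ᵐ[volume.restrict (Ioc 0 T)] v) :
    locNorm T u = locNorm T v := by
  unfold locNorm
  congr 1
  refine integral_congr_ae ?_
  filter_upwards [h] with t ht
  rw [ht]

lemma locNorm_coeFn_eq_norm {T : ℝ} (f : Lp ℝ 2 (volume.restrict (Ioc (0 : ℝ) T))) :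
    locNorm T f = ‖f‖ := by
  rw [norm_eq_sqrt_real_inner, L2.inner_eq_integral_mul, locNorm]
  simp only [sq]

lemma locNorm_eq_norm_toLp {T : ℝ} {u : ℝ → ℝ}
    (hu : MemLp u 2 (volume.restrict (Ioc 0 T))) : locNorm T u = ‖hu.toLp u‖ := by
  rw [← locNorm_coeFn_eq_norm, locNorm_congr_ae hu.coeFn_toLp.symm]

lemma locNorm_mono (x : Lloc) {S T : ℝ} (hS : 0 < S) (hST : S ≤ T) :
    locNorm S x.1 ≤ locNorm T x.1 :=
  Real.sqrt_le_sqrt <| setIntegral_mono_set (x.2.2 T (hS.trans_le hST))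
    (.of_forall fun _ => sq_nonneg _) (.of_forall <| Ioc_subset_Ioc_right hST)

lemma Lloc.memLp_two (x : Lloc) {T : ℝ} (hT : 0 < T) :
    MemLp x.1 2 (volume.restrict (Ioc 0 T)) :=
  (memLp_two_iff_integrable_sq x.2.1.aestronglyMeasurable).2 (x.2.2 T hT)

lemma TestIdx.memLp_two (p : TestIdx) : MemLp p.1.2 2 (volume.restrict (Ioc 0 p.1.1)) :=
  (memLp_two_iff_integrable_sq p.2.2.1.aestronglyMeasurable).2 p.2.2.2

lemma abs_pairing_le (p : TestIdx) (x : Lloc) :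
    |pairing p x| ≤ locNorm p.1.1 x.1 * locNorm p.1.1 p.1.2 := by
  rw [locNorm_eq_norm_toLp (x.memLp_two p.2.1), locNorm_eq_norm_toLp p.memLp_two, pairing,
    ← MemLp.inner_toLp_eq_integral_mul]
  exact abs_real_inner_le_norm _ _

def TestIdx.ofLp {T : ℝ} (hT : 0 < T) (f : Lp ℝ 2 (volume.restrict (Ioc (0 : ℝ) T))) :
    TestIdx :=
  ⟨(T, f), hT, (Lp.stronglyMeasurable f).measurable, (Lp.memLp f).integrable_sq⟩

lemma pairing_ofLp {T : ℝ} (hT : 0 < T) (f : Lp ℝ 2 (volume.restrict (Ioc (0 : ℝ) T)))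
    (x : Lloc) : pairing (TestIdx.ofLp hT f) x = ⟪(x.memLp_two hT).toLp x.1, f⟫ := by
  change ∫ t in Ioc 0 T, x.1 t * f t = _
  rw [← MemLp.inner_toLp_eq_integral_mul (x.memLp_two hT) (Lp.memLp f), Lp.toLp_coeFn]

lemma TestIdx.exists_extension_by_zero (p : TestIdx) {T : ℝ} (hT : p.1.1 ≤ T) :
    ∃ f : Lp ℝ 2 (volume.restrict (Ioc (0 : ℝ) T)), ∀ u : ℝ → ℝ,
      ∫ t in Ioc 0 T, u t * f t = ∫ t in Ioc 0 p.1.1, u t * p.1.2 t := by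
  have hf : MemLp ((Ioc 0 p.1.1).indicator p.1.2) 2 (volume.restrict (Ioc 0 T)) := by
    rw [memLp_indicator_iff_restrict measurableSet_Ioc, Measure.restrict_restrict measurableSet_Ioc,
      inter_eq_left.2 (Ioc_subset_Ioc_right hT)]
    exact p.memLp_two
  refine ⟨hf.toLp _, fun u => ?_⟩
  calc ∫ t in Ioc 0 T, u t * hf.toLp _ t
      = ∫ t in Ioc 0 T, (Ioc 0 p.1.1).indicator (fun t => u t * p.1.2 t) t := by
        refine integral_congr_ae ?_
        filter_upwards [hf.coeFn_toLp] with t ht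
        rw [ht, indicator_mul_right]
    _ = _ := by
      rw [setIntegral_indicator measurableSet_Ioc, inter_eq_right.2 (Ioc_subset_Ioc_right hT)]

def IsPairingLinear (y : TestIdx → ℝ) : Prop :=
  ∀ (p q r : TestIdx) (a b : ℝ), (∀ x, pairing r x = a * pairing p x + b * pairing q x) →
    y r = a * y p + b * y q

lemma isClosed_setOf_isPairingLinear : IsClosed {y : TestIdx → ℝ | IsPairingLinear y} := by
  simp only [IsPairingLinear, Set.ofPred_forall]
  exact isClosed_iInter fun p => isClosed_iInter fun q => isClosed_iInter fun r =>
    isClosed_iInter fun a => isClosed_iInter fun b => isClosed_iInter fun _ =>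
      isClosed_eq (continuous_apply r) (by fun_prop)

namespace IsPairingLinear

variable {y : TestIdx → ℝ}

lemma eq_of_pairing_eq (hy : IsPairingLinear y) {p r : TestIdx} (h : pairing r = pairing p) :
    y r = y p := by
  simpa using hy p p r 1 0 fun x => by simp [h]

lemma exists_representative (hy : IsPairingLinear y) {T C : ℝ} (hT : 0 < T) (hC : 0 ≤ C)
    (hbd : ∀ f, |y (TestIdx.ofLp hT f)| ≤ C * ‖f‖) :
    ∃ g : Lp ℝ 2 (volume.restrict (Ioc (0 : ℝ) T)), ‖g‖ ≤ C ∧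
      ∀ p : TestIdx, p.1.1 ≤ T → y p = ∫ t in Ioc 0 p.1.1, g t * p.1.2 t := by
  obtain ⟨g, hgC, hgy⟩ := exists_norm_le_forall_inner_eq (fun f => y (TestIdx.ofLp hT f))
    (fun f g => by
      simpa using hy _ _ (TestIdx.ofLp hT (f + g)) 1 1 fun x => by
        simp [pairing_ofLp, inner_add_right])
    (fun c f => by
      simpa using hy _ (TestIdx.ofLp hT f) (TestIdx.ofLp hT (c • f)) c 0 fun x => by
        simp [pairing_ofLp, inner_smul_right])
    hC hbd
  refine ⟨g, hgC, fun p hp => ?_⟩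
  obtain ⟨f, hf⟩ := p.exists_extension_by_zero hp
  calc y p = y (TestIdx.ofLp hT f) :=
        (hy.eq_of_pairing_eq (r := TestIdx.ofLp hT f) (funext fun x => hf x.1)).symm
    _ = ∫ t in Ioc 0 T, g t * f t := by rw [← hgy f, L2.inner_eq_integral_mul]
    _ = _ := hf g

end IsPairingLinear

def locBall (M : ℕ → ℝ) : Set Lloc := {x | ∀ k : ℕ, locNorm (k + 1) x.1 ≤ M k}

lemma IsPairingLinear.exists_mem_locBall {y : TestIdx → ℝ} (hy : IsPairingLinear y)
    {M : ℕ → ℝ} (hM : ∀ k, 0 ≤ M k)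
    (hbd : ∀ (p : TestIdx) (k : ℕ), p.1.1 ≤ k + 1 → |y p| ≤ M k * locNorm p.1.1 p.1.2) :
    ∃ z ∈ locBall M, ∀ p, pairing p z = y p := by
  have hpos (k : ℕ) : (0 : ℝ) < k + 1 := k.cast_add_one_pos
  choose g hgM hrep using fun k => hy.exists_representative (hpos k) (hM k) fun f => by
    rw [← locNorm_coeFn_eq_norm]
    exact hbd (TestIdx.ofLp (hpos k) f) k le_rfl
  have hcons (j k : ℕ) (hjk : j ≤ k) :
      (g j : ℝ → ℝ) =ᵐ[volume.restrict (Ioc (0 : ℝ) (j + 1))] g k := by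
    have hjk' : (j : ℝ) + 1 ≤ k + 1 := by gcongr
    exact Lp.ae_eq_of_forall_integral_mul_eq _
      ((Lp.memLp (g k)).mono_measure (Measure.restrict_mono (Ioc_subset_Ioc_right hjk') le_rfl))
      fun f => (hrep j (TestIdx.ofLp (hpos j) f) le_rfl).symm.trans (hrep k _ hjk')
  obtain ⟨z, hzm, hz⟩ := exists_measurable_ae_eq_of_consistent
    (fun k => (Lp.stronglyMeasurable (g k)).measurable) hcons
  have hzT (T : ℝ) : ∃ k : ℕ, T ≤ k + 1 ∧ z =ᵐ[volume.restrict (Ioc 0 T)] g k := by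
    have hT : T ≤ ⌈T⌉₊ + 1 := by linarith [Nat.le_ceil T]
    exact ⟨⌈T⌉₊, hT, ae_restrict_of_ae_restrict_of_subset (Ioc_subset_Ioc_right hT) (hz _)⟩
  have hmem : LlocMem z := ⟨hzm, fun T _ => by
    obtain ⟨k, hk, hzk⟩ := hzT T
    exact ((memLp_congr_ae hzk).2 ((Lp.memLp (g k)).mono_measure
      (Measure.restrict_mono (Ioc_subset_Ioc_right hk) le_rfl))).integrable_sq⟩
  refine ⟨⟨z, hmem⟩, fun k => ?_, fun p => ?_⟩
  · exact (locNorm_congr_ae (hz k)).trans_le ((locNorm_coeFn_eq_norm _).trans_le (hgM k))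
  · obtain ⟨k, hk, hzk⟩ := hzT p.1.1
    rw [hrep k p hk]
    refine integral_congr_ae ?_
    filter_upwards [hzk] with t ht
    rw [ht]

lemma isInducing_pairing : IsInducing fun (x : Lloc) (p : TestIdx) => pairing p x :=
  inducing_iInf_to_pi _

lemma continuous_pairing (p : TestIdx) : Continuous (pairing p) :=
  (continuous_apply p).comp isInducing_pairing.continuous

lemma isCompact_locBall (M : ℕ → ℝ) : IsCompact (locBall M) := by
  by_cases hM : ∀ k, 0 ≤ M k
  swap
  · obtain ⟨k, hk⟩ := not_forall.1 hM
    convert isCompact_empty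
    exact eq_empty_of_forall_notMem fun x hx => hk ((locNorm_nonneg _ _).trans (hx k))
  set S := {y : TestIdx → ℝ | IsPairingLinear y ∧
    ∀ (p : TestIdx) (k : ℕ), p.1.1 ≤ k + 1 → |y p| ≤ M k * locNorm p.1.1 p.1.2}
  have himage : (fun x p => pairing p x) '' locBall M = S := by
    ext y
    constructor
    · rintro ⟨x, hx, rfl⟩
      exact ⟨fun p q r a b h => h x, fun p k hk => (abs_pairing_le p x).trans <|
        mul_le_mul_of_nonneg_right ((locNorm_mono x p.2.1 hk).trans (hx k)) (locNorm_nonneg _ _)⟩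
    · rintro ⟨hy, hbd⟩
      obtain ⟨z, hz, hzy⟩ := hy.exists_mem_locBall hM hbd
      exact ⟨z, hz, funext hzy⟩
  have hclosed : IsClosed S := by
    simp only [S, Set.ofPred_and, Set.ofPred_forall]
    exact isClosed_setOf_isPairingLinear.inter <| isClosed_iInter fun p =>
      isClosed_iInter fun k => isClosed_iInter fun _ =>
        isClosed_le (continuous_apply p).abs continuous_const
  have hbox : S ⊆ univ.pi fun p : TestIdx =>
      Icc (-(M ⌈p.1.1⌉₊ * locNorm p.1.1 p.1.2)) (M ⌈p.1.1⌉₊ * locNorm p.1.1 p.1.2) :=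
    fun y hy p _ => abs_le.1 (hy.2 p _ (by linarith [Nat.le_ceil p.1.1]))
  rw [isInducing_pairing.isCompact_iff, himage]
  exact (isCompact_univ_pi fun p => isCompact_Icc).of_isClosed_subset hclosed hbox

lemma exists_locNorm_le_of_isCompact {K : Set Lloc} (hK : IsCompact K) {T : ℝ} (hT : 0 < T) :
    ∃ C, ∀ x ∈ K, locNorm T x.1 ≤ C := by
  obtain ⟨C, hC⟩ := exists_norm_le_of_forall_abs_inner_le
    (s := (fun x : Lloc => (x.memLp_two hT).toLp x.1) '' K) fun f => by
      obtain ⟨C, hC⟩ := hK.exists_bound_of_continuousOn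
        (continuous_pairing (TestIdx.ofLp hT f)).continuousOn
      refine ⟨C, forall_mem_image.2 fun x hx => ?_⟩
      rw [← pairing_ofLp]
      exact hC x hx
  exact ⟨C, fun x hx => (locNorm_eq_norm_toLp _).trans_le (hC _ ⟨x, hx, rfl⟩)⟩

theorem stmt_0_general {Ω : Type*} [MeasurableSpace Ω] (P : Measure Ω)
    (X : ℕ → Ω → Lloc) :
    TightLaws P X ↔ ∀ T : ℝ, 0 < T → TightReal P (fun n ω => locNorm T (X n ω).1) := by
  constructor
  · intro h T hT ε hε
    obtain ⟨K, hK, hXK⟩ := h ε hε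
    obtain ⟨C, hC⟩ := exists_locNorm_le_of_isCompact hK hT
    refine ⟨C, fun n => (measure_mono fun ω (hω : C < |_|) hωK => ?_).trans (hXK n)⟩
    rw [abs_of_nonneg (locNorm_nonneg _ _)] at hω
    exact (hC _ hωK).not_gt hω
  · intro h ε hε
    obtain ⟨δ, hδ, hδε⟩ := ENNReal.exists_pos_sum_of_countable hε.ne' ℕ
    choose M hM using fun k : ℕ =>
      h (k + 1) k.cast_add_one_pos (δ k) (ENNReal.coe_pos.2 (hδ k))
    refine ⟨locBall M, isCompact_locBall M, fun n => ?_⟩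
    calc P (X n ⁻¹' (locBall M)ᶜ)
        ≤ P (⋃ k : ℕ, {ω | M k < |locNorm (k + 1) (X n ω).1|}) := measure_mono fun ω hω => by
          obtain ⟨k, hk⟩ : ∃ k : ℕ, M k < locNorm (k + 1) (X n ω).1 := by
            simpa [locBall] using hω
          exact mem_iUnion.2 ⟨k, hk.trans_le (le_abs_self _)⟩
      _ ≤ ∑' k, (δ k : ℝ≥0∞) := (measure_iUnion_le _).trans (ENNReal.tsum_le_tsum fun k => hM k n)
      _ ≤ ε := hδε.le

/-- Lemma `L2tightness`. A sequence of `L²_loc`-valued processes `X_n` is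
tight for the `L²_w`-topology if and only if, for each `T > 0`, the sequence of real random
variables `(|X_n|_T)` is tight. -/
theorem stmt_0 {Ω : Type*} [MeasurableSpace Ω] (P : Measure Ω) [IsProbabilityMeasure P]
    (X : ℕ → Ω → Lloc) (hX : ∀ n, Measurable (X n)) :
    TightLaws P X ↔ ∀ T : ℝ, 0 < T → TightReal P (fun n ω => locNorm T (X n ω).1) :=
  stmt_0_general P X

end RV
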